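/- Let k ≥ 8 be a natural number with k ≡ 0 (mod 4). Then among the translation-orbits of 4-element subsets of ZMod k there is exactly one orbit of size k/4 (the class [k/4,k/4,k/4]), there are exactly k/4 − 1 orbits of size k/2 (the classes [a,b,a] with 1 ≤ a < b and a + b = k/2), and every other orbit has size k. -/

import Mathlib

/-- The equivalence class `[x,y,z]`: the translation orbit of the subset
`{0, x, x+y, x+y+z}` of `ZMod k`. -/
def transClass (k : ℕ) (x y z : ℕ) : Set (Finset (ZMod k)) :=
  { T | ∃ i : ZMod k,
      T = {i, i + (x : ZMod k), i + (x : ZMod k) + (y : ZMod k),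
           i + (x : ZMod k) + (y : ZMod k) + (z : ZMod k)} }

/-- The orbit of a subset `T ⊆ ZMod k` under the translation action. -/
def transOrbit (k : ℕ) (T : Finset (ZMod k)) : Set (Finset (ZMod k)) :=
  { S | ∃ d : ZMod k, S = T.image (· + d) }

/-- The set of translation orbits of 4-element subsets of `ZMod k`. -/
def transOrbits4 (k : ℕ) : Set (Set (Finset (ZMod k))) :=
  { O | ∃ T : Finset (ZMod k), T.card = 4 ∧ O = transOrbit k T }

/-!
By orbit–stabilizer, the orbit of a 4-subset `T` of `ZMod (4q)` has `4q / |Stab T|` elements, and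
`|Stab T|` divides `|T| = 4` because `T` is a union of cosets of its stabilizer. In a cyclic group
the subgroup of order `d` is the set of solutions of `d • x = 0`, so `|Stab T| = 4` iff `q`
stabilizes `T`, which makes `T` a translate of `{0, q, 2q, 3q}`, and `|Stab T| = 2` iff `2q` but
not `q` stabilizes `T`, which makes `T` a translate of `{0, u, 2q, 2q + u}` with `0 < u < 2q`,
`u ≠ q`: the class `[a, 2q - a, a]` with `a = min u (2q - u)`. These classes are distinct for
`1 ≤ a < q`, since `a` is the only difference of two elements of the class lying in `[1, q)`.
-/

open Pointwise AddAction
open scoped Finset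

theorem AddAction.ncard_orbit_mul_card_stabilizer (G : Type*) {X : Type*} [AddGroup G]
    [AddAction G X] (x : X) : (orbit G x).ncard * Nat.card (stabilizer G x) = Nat.card G := by
  rw [← index_stabilizer, mul_comm, AddSubgroup.card_mul_index]

theorem AddAction.card_stabilizer_dvd_card {G : Type*} [AddCommGroup G] [DecidableEq G]
    (T : Finset G) : Nat.card (stabilizer G T) ∣ T.card := by
  set H := stabilizer G T
  have hfiber : ∀ x ∈ T, #(T.filter fun t : G => (t : G ⧸ H) = x) = Nat.card H := by
    intro x hx
    have hcoset : (T.filter fun t : G => (t : G ⧸ H) = x : Set G) = (x + ·) '' H := by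
      ext t
      simp only [Finset.coe_filter, Set.mem_image, SetLike.mem_coe]
      constructor
      · rintro ⟨-, ht⟩
        exact ⟨-x + t, QuotientAddGroup.eq.mp ht.symm, add_neg_cancel_left x t⟩
      · rintro ⟨h, hh, rfl⟩
        refine ⟨?_, QuotientAddGroup.eq.mpr (by simpa using H.neg_mem hh)⟩
        simpa [add_comm] using mem_stabilizer_finset'.mp hh hx
    rw [← Set.ncard_coe_finset, hcoset, Set.ncard_image_of_injective _ (add_right_injective x),
      ← Nat.card_coe_set_eq, SetLike.coe_sort_coe]
  rw [Finset.card_eq_sum_card_image (fun t : G => (t : G ⧸ H)) T,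
    Finset.sum_const_nat (m := Nat.card H) (by simpa using hfiber)]
  exact dvd_mul_left _ _

/-- A finite cyclic group has at most `n` solutions of `n • a = 0`, and a subgroup of order `n`
already provides `n` of them. -/
theorem IsAddCyclic.mem_of_card_nsmul_eq_zero {G : Type*} [AddGroup G] [Finite G]
    [IsAddCyclic G] (H : AddSubgroup G) {x : G} (hx : Nat.card H • x = 0) : x ∈ H := by
  classical
  have := Fintype.ofFinite G
  set S := Finset.univ.filter fun a : G => Nat.card H • a = 0
  have hsub : (H : Set G).toFinset ⊆ S := fun a ha => by
    simpa [S, addOrderOf_dvd_iff_nsmul_eq_zero] using H.addOrderOf_dvd_natCard (by simpa using ha)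
  have hcard : #S ≤ (H : Set G).toFinset.card := by
    rw [Set.toFinset_card, ← Nat.card_eq_fintype_card, SetLike.coe_sort_coe]
    exact IsAddCyclic.card_nsmul_eq_zero_le Nat.card_pos
  have hxS : x ∈ S := by simpa [S] using hx
  rw [← Finset.eq_of_subset_of_card_le hsub hcard] at hxS
  simpa using hxS

theorem ZMod.natCast_mem_iff_dvd_card {n d e : ℕ} [NeZero n] (hn : n = d * e)
    (H : AddSubgroup (ZMod n)) : (e : ZMod n) ∈ H ↔ d ∣ Nat.card H := by
  have he : 0 < e := Nat.pos_of_ne_zero (right_ne_zero_of_mul (hn ▸ NeZero.ne n))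
  have horder : addOrderOf (e : ZMod n) = d := by
    rw [ZMod.addOrderOf_coe _ (NeZero.ne n)]
    simp [hn, Nat.mul_div_cancel _ he]
  constructor
  · exact fun hmem => horder ▸ H.addOrderOf_dvd_natCard hmem
  · rintro ⟨c, hc⟩
    apply IsAddCyclic.mem_of_card_nsmul_eq_zero
    rw [hc, mul_nsmul, ← horder, addOrderOf_nsmul_eq_zero, nsmul_zero]

theorem ZMod.natCast_injOn_Iio (k : ℕ) : Set.InjOn (Nat.cast : ℕ → ZMod k) (Set.Iio k) :=
  fun a ha b hb h => by
    rwa [ZMod.natCast_eq_natCast_iff', Nat.mod_eq_of_lt ha, Nat.mod_eq_of_lt hb] at h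

/-- The representative `{0, x, x+y, x+y+z}` of the class `[x,y,z]`. -/
def classRep (k x y z : ℕ) : Finset (ZMod k) :=
  ({0, x, x + y, x + y + z} : Finset ℕ).image Nat.cast

section ClassRep

variable {k : ℕ}

theorem vadd_classRep (x y z : ℕ) (i : ZMod k) :
    i +ᵥ classRep k x y z = {i, i + x, i + x + y, i + x + y + z} := by
  simp [classRep, Finset.vadd_finset_def, Finset.image_insert, add_assoc]

theorem classRep_eq (x y z : ℕ) :
    classRep k x y z = {0, (x : ZMod k), (x : ZMod k) + y, (x : ZMod k) + y + z} := by
  simpa using vadd_classRep x y z (0 : ZMod k)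

theorem transClass_eq_orbit (x y z : ℕ) :
    transClass k x y z = orbit (ZMod k) (classRep k x y z) := by
  ext S
  simp [transClass, mem_orbit_iff, vadd_classRep, eq_comm]

theorem transOrbit_eq_orbit (T : Finset (ZMod k)) : transOrbit k T = orbit (ZMod k) T := by
  ext S
  simp [transOrbit, mem_orbit_iff, Finset.vadd_finset_def, add_comm, eq_comm]

theorem mem_transOrbits4 {O : Set (Finset (ZMod k))} :
    O ∈ transOrbits4 k ↔ ∃ T : Finset (ZMod k), T.card = 4 ∧ O = orbit (ZMod k) T := by
  simp [transOrbits4, transOrbit_eq_orbit]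

theorem natCast_mem_classRep_iff {x y z m : ℕ} (hm : m < k) (hk : x + y + z < k) :
    (m : ZMod k) ∈ classRep k x y z ↔ m = 0 ∨ m = x ∨ m = x + y ∨ m = x + y + z := by
  simp only [classRep, Finset.mem_image]
  constructor
  · rintro ⟨n, hn, h⟩
    have hnk : n < k := by
      simp only [Finset.mem_insert, Finset.mem_singleton] at hn
      omega
    rw [← ZMod.natCast_injOn_Iio k hnk hm h]
    simpa using hn
  · exact fun h => ⟨m, by simpa using h, rfl⟩

theorem card_classRep {x y z : ℕ} (hx : 0 < x) (hy : 0 < y) (hz : 0 < z) (hk : x + y + z < k) :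
    (classRep k x y z).card = 4 := by
  rw [classRep, Finset.card_image_of_injOn]
  · rw [Finset.card_insert_of_notMem, Finset.card_insert_of_notMem, Finset.card_pair] <;>
      simp <;> omega
  · refine (ZMod.natCast_injOn_Iio k).mono fun n hn => ?_
    simp only [Finset.coe_insert, Finset.coe_singleton, Set.mem_insert_iff,
      Set.mem_singleton_iff] at hn
    simp only [Set.mem_Iio]
    omega

end ClassRep

section FourDividesK

variable {q : ℕ} {T : Finset (ZMod (4 * q))}

theorem four_mul_natCast_eq_zero : (4 * q : ZMod (4 * q)) = 0 := by
  exact_mod_cast ZMod.natCast_self (4 * q)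

theorem natCast_mem_stabilizer_classRep :
    (q : ZMod (4 * q)) ∈ stabilizer (ZMod (4 * q)) (classRep (4 * q) q q q) := by
  have h4 := four_mul_natCast_eq_zero (q := q)
  rw [mem_stabilizer_finset', classRep_eq]
  simp only [Finset.mem_insert, Finset.mem_singleton, vadd_eq_add]
  rintro t (rfl | rfl | rfl | rfl) <;> grind

theorem two_mul_mem_stabilizer_classRep {a b : ℕ} (hab : a + b = 2 * q) :
    ((2 * q : ℕ) : ZMod (4 * q)) ∈ stabilizer (ZMod (4 * q)) (classRep (4 * q) a b a) := by
  have h4 := four_mul_natCast_eq_zero (q := q)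
  have hab' : ((a + b : ℕ) : ZMod (4 * q)) = (2 * q : ℕ) := congrArg Nat.cast hab
  rw [mem_stabilizer_finset', classRep_eq]
  simp only [Finset.mem_insert, Finset.mem_singleton, vadd_eq_add]
  push_cast at hab' ⊢
  rintro t (rfl | rfl | rfl | rfl) <;> grind

theorem natCast_notMem_stabilizer_classRep {a b : ℕ} (hab : a < b) (hsum : a + b = 2 * q) :
    (q : ZMod (4 * q)) ∉ stabilizer (ZMod (4 * q)) (classRep (4 * q) a b a) := by
  intro hq
  have h0 : ((0 : ℕ) : ZMod (4 * q)) ∈ classRep (4 * q) a b a := by simp [classRep]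
  have := mem_stabilizer_finset'.mp hq h0
  rw [vadd_eq_add, Nat.cast_zero, add_zero, natCast_mem_classRep_iff (by omega) (by omega)] at this
  omega

theorem natCast_vadd_classRep {a b : ℕ} (hab : a + b = 2 * q) :
    (b : ZMod (4 * q)) +ᵥ classRep (4 * q) a b a = classRep (4 * q) b a b := by
  have h4 := four_mul_natCast_eq_zero (q := q)
  have hab' : ((a + b : ℕ) : ZMod (4 * q)) = (2 * q : ℕ) := congrArg Nat.cast hab
  push_cast at hab'
  rw [vadd_classRep, classRep_eq, show (b + a + b + a : ZMod (4 * q)) = 0 by grind]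
  ext t
  simp only [Finset.mem_insert, Finset.mem_singleton]
  tauto

theorem card_stabilizer_eq_one_or_two_or_four (hT : T.card = 4) :
    Nat.card (stabilizer (ZMod (4 * q)) T) = 1 ∨ Nat.card (stabilizer (ZMod (4 * q)) T) = 2 ∨
      Nat.card (stabilizer (ZMod (4 * q)) T) = 4 := by
  have hdvd := hT ▸ card_stabilizer_dvd_card T
  have := Nat.le_of_dvd four_pos hdvd
  interval_cases h : Nat.card (stabilizer (ZMod (4 * q)) T) <;> simp_all

theorem eq_of_transClass_eq {a b a' b' : ℕ} (ha : 0 < a) (hab : a < b) (hsum : a + b = 2 * q)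
    (ha' : 0 < a') (hab' : a' < b') (hsum' : a' + b' = 2 * q)
    (h : transClass (4 * q) a b a = transClass (4 * q) a' b' a') : a = a' := by
  rw [transClass_eq_orbit, transClass_eq_orbit, orbit_eq_iff, mem_orbit_iff] at h
  obtain ⟨i, hi⟩ := h
  have h0 : ((0 : ℕ) : ZMod (4 * q)) ∈ i +ᵥ classRep (4 * q) a' b' a' := by
    rw [hi]
    simp [classRep]
  have hamem : (a : ZMod (4 * q)) ∈ i +ᵥ classRep (4 * q) a' b' a' := by
    rw [hi]
    simp [classRep]
  obtain ⟨s, hs, his⟩ := Finset.mem_vadd_finset.mp h0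
  obtain ⟨s', hs', his'⟩ := Finset.mem_vadd_finset.mp hamem
  obtain ⟨n, hn, rfl⟩ := Finset.mem_image.mp hs
  have hn' : ((a + n : ℕ) : ZMod (4 * q)) ∈ classRep (4 * q) a' b' a' := by
    convert hs' using 1
    simp only [vadd_eq_add] at his his'
    push_cast
    linear_combination his - his'
  simp only [Finset.mem_insert, Finset.mem_singleton] at hn
  rw [natCast_mem_classRep_iff (by omega) (by omega)] at hn'
  omega

theorem ncard_setOf_palindromic_transClass :
    {O | ∃ a b : ℕ, 1 ≤ a ∧ a < b ∧ a + b = 2 * q ∧ O = transClass (4 * q) a b a}.ncard =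
      q - 1 := by
  have himage : {O | ∃ a b : ℕ, 1 ≤ a ∧ a < b ∧ a + b = 2 * q ∧ O = transClass (4 * q) a b a} =
      (fun a => transClass (4 * q) a (2 * q - a) a) '' Set.Ico 1 q := by
    ext O
    simp only [Set.mem_ofPred_eq, Set.mem_image, Set.mem_Ico]
    constructor
    · rintro ⟨a, b, ha, hab, hsum, rfl⟩
      exact ⟨a, ⟨ha, by omega⟩, by rw [show 2 * q - a = b by omega]⟩
    · rintro ⟨a, ⟨ha, haq⟩, rfl⟩
      exact ⟨a, 2 * q - a, ha, by omega, by omega, rfl⟩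
  rw [himage, Set.InjOn.ncard_image, Set.ncard_eq_toFinset_card', Set.toFinset_Ico,
    Nat.card_Ico]
  rintro a ⟨ha, haq⟩ a' ⟨ha', ha'q⟩ h
  exact eq_of_transClass_eq ha (by omega) (by omega) ha' (by omega) (by omega) h

variable [NeZero q]

theorem natCast_mem_stabilizer_iff_card_eq_four (hT : T.card = 4) :
    (q : ZMod (4 * q)) ∈ stabilizer (ZMod (4 * q)) T ↔
      Nat.card (stabilizer (ZMod (4 * q)) T) = 4 := by
  rw [ZMod.natCast_mem_iff_dvd_card rfl]
  rcases card_stabilizer_eq_one_or_two_or_four hT with h | h | h <;> rw [h] <;> decide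

theorem two_mul_mem_stabilizer_iff_card_eq_two_or_four (hT : T.card = 4) :
    ((2 * q : ℕ) : ZMod (4 * q)) ∈ stabilizer (ZMod (4 * q)) T ↔
      Nat.card (stabilizer (ZMod (4 * q)) T) = 2 ∨ Nat.card (stabilizer (ZMod (4 * q)) T) = 4 := by
  rw [ZMod.natCast_mem_iff_dvd_card (d := 2) (by ring)]
  rcases card_stabilizer_eq_one_or_two_or_four hT with h | h | h <;> rw [h] <;> decide

theorem ncard_orbit_eq_four_mul_div_card_stabilizer :
    (orbit (ZMod (4 * q)) T).ncard = 4 * q / Nat.card (stabilizer (ZMod (4 * q)) T) := by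
  have := ncard_orbit_mul_card_stabilizer (ZMod (4 * q)) T
  rw [Nat.card_zmod] at this
  exact Nat.eq_div_of_mul_eq_left Nat.card_pos.ne' this

theorem ncard_orbit_eq_iff_natCast_mem_stabilizer (hT : T.card = 4) :
    (orbit (ZMod (4 * q)) T).ncard = q ↔ (q : ZMod (4 * q)) ∈ stabilizer (ZMod (4 * q)) T := by
  have := NeZero.pos q
  rw [natCast_mem_stabilizer_iff_card_eq_four hT, ncard_orbit_eq_four_mul_div_card_stabilizer]
  rcases card_stabilizer_eq_one_or_two_or_four hT with h | h | h <;> rw [h] <;> omega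

theorem ncard_orbit_eq_two_mul_iff (hT : T.card = 4) :
    (orbit (ZMod (4 * q)) T).ncard = 2 * q ↔
      ((2 * q : ℕ) : ZMod (4 * q)) ∈ stabilizer (ZMod (4 * q)) T ∧
        (q : ZMod (4 * q)) ∉ stabilizer (ZMod (4 * q)) T := by
  have := NeZero.pos q
  rw [natCast_mem_stabilizer_iff_card_eq_four hT,
    two_mul_mem_stabilizer_iff_card_eq_two_or_four hT, ncard_orbit_eq_four_mul_div_card_stabilizer]
  rcases card_stabilizer_eq_one_or_two_or_four hT with h | h | h <;> rw [h] <;> omega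

theorem ncard_orbit_eq_four_mul_of_ne (hT : T.card = 4)
    (hq : (orbit (ZMod (4 * q)) T).ncard ≠ q) (h2q : (orbit (ZMod (4 * q)) T).ncard ≠ 2 * q) :
    (orbit (ZMod (4 * q)) T).ncard = 4 * q := by
  rw [ncard_orbit_eq_four_mul_div_card_stabilizer] at hq h2q ⊢
  rcases card_stabilizer_eq_one_or_two_or_four hT with h | h | h <;> rw [h] at hq h2q ⊢ <;> omega

theorem orbit_eq_transClass_of_natCast_mem_stabilizer (hT : T.card = 4)
    (hq : (q : ZMod (4 * q)) ∈ stabilizer (ZMod (4 * q)) T) :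
    orbit (ZMod (4 * q)) T = transClass (4 * q) q q q := by
  have hq0 := NeZero.pos q
  obtain ⟨x, hx⟩ : T.Nonempty := Finset.card_pos.mp (by omega)
  have hqT : ∀ t ∈ T, (q : ZMod (4 * q)) + t ∈ T := fun t ht => mem_stabilizer_finset'.mp hq ht
  have hsub : x +ᵥ classRep (4 * q) q q q ⊆ T := by
    rw [vadd_classRep]
    simp only [Finset.insert_subset_iff, Finset.singleton_subset_iff]
    refine ⟨hx, ?_, ?_, ?_⟩
    · simpa [add_comm] using hqT x hx
    · simpa [add_comm, add_left_comm] using hqT _ (hqT x hx)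
    · simpa [add_comm, add_left_comm] using hqT _ (hqT _ (hqT x hx))
  have hcard : T.card ≤ (x +ᵥ classRep (4 * q) q q q).card := by
    rw [Finset.card_vadd_finset, card_classRep hq0 hq0 hq0 (by omega), hT]
  rw [transClass_eq_orbit, ← Finset.eq_of_subset_of_card_le hsub hcard, orbit_vadd]

theorem exists_natCast_add_mem_of_two_mul_mem_stabilizer (hT : T.card = 4)
    (h2q : ((2 * q : ℕ) : ZMod (4 * q)) ∈ stabilizer (ZMod (4 * q)) T) {x : ZMod (4 * q)}
    (hx : x ∈ T) :
    ∃ u v : ℕ, 0 < u ∧ 0 < v ∧ u + v = 2 * q ∧ (u : ZMod (4 * q)) + x ∈ T := by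
  set c : ZMod (4 * q) := ((2 * q : ℕ) : ZMod (4 * q))
  have hc : c + c = 0 := by
    have h4 := four_mul_natCast_eq_zero (q := q)
    push_cast [c]
    linear_combination h4
  obtain ⟨y, hy, hyx⟩ : ∃ y ∈ T, y ≠ x ∧ y ≠ c + x := by
    by_contra! hne
    have hsub : T ⊆ {x, c + x} := fun y hy => by
      rcases eq_or_ne y x with rfl | hyx
      · simp
      · simp [hne y hy hyx]
    have := Finset.card_le_card hsub
    have := Finset.card_le_two (a := x) (b := c + x)
    omega
  -- `u` is `y - x` reduced modulo `2q`; when the reduction is needed, `u + x = c + y`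
  set m := (y - x).val
  have hm : (m : ZMod (4 * q)) = y - x := ZMod.natCast_zmod_val _
  have hm4 : m < 4 * q := ZMod.val_lt _
  rcases lt_or_ge m (2 * q) with hm2 | hm2
  · refine ⟨m, 2 * q - m, Nat.pos_of_ne_zero fun h0 => hyx.1 ?_, by omega, by omega, ?_⟩
    · rw [h0, Nat.cast_zero, eq_comm, sub_eq_zero] at hm
      exact hm
    · rwa [hm, sub_add_cancel]
  · refine ⟨m - 2 * q, 4 * q - m, Nat.pos_of_ne_zero fun h0 => hyx.2 ?_, by omega, by omega, ?_⟩
    · rw [show m = 2 * q by omega] at hm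
      linear_combination -hm
    · convert mem_stabilizer_finset'.mp h2q hy using 1
      rw [Nat.cast_sub hm2, hm, vadd_eq_add]
      linear_combination -hc

theorem exists_eq_vadd_classRep_of_two_mul_mem_stabilizer (hT : T.card = 4)
    (h2q : ((2 * q : ℕ) : ZMod (4 * q)) ∈ stabilizer (ZMod (4 * q)) T) :
    ∃ x : ZMod (4 * q), ∃ u v : ℕ, 0 < u ∧ 0 < v ∧ u + v = 2 * q ∧
      T = x +ᵥ classRep (4 * q) u v u := by
  obtain ⟨x, hx⟩ : T.Nonempty := Finset.card_pos.mp (by omega)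
  obtain ⟨u, v, hu, hv, huv, hux⟩ := exists_natCast_add_mem_of_two_mul_mem_stabilizer hT h2q hx
  have hcT : ∀ t ∈ T, ((2 * q : ℕ) : ZMod (4 * q)) + t ∈ T :=
    fun t ht => mem_stabilizer_finset'.mp h2q ht
  have huv' : (u + v : ZMod (4 * q)) = ((2 * q : ℕ) : ZMod (4 * q)) := by
    rw [← Nat.cast_add, huv]
  refine ⟨x, u, v, hu, hv, huv, (Finset.eq_of_subset_of_card_le ?_ ?_).symm⟩
  · rw [vadd_classRep]
    simp only [Finset.insert_subset_iff, Finset.singleton_subset_iff]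
    refine ⟨hx, by rwa [add_comm], ?_, ?_⟩
    · convert hcT x hx using 1
      linear_combination huv'
    · convert hcT _ hux using 1
      linear_combination huv'
  · rw [Finset.card_vadd_finset, card_classRep hu hv hu (by omega), hT]

theorem exists_orbit_eq_transClass_of_two_mul_mem_stabilizer (hT : T.card = 4)
    (h2q : ((2 * q : ℕ) : ZMod (4 * q)) ∈ stabilizer (ZMod (4 * q)) T)
    (hq : (q : ZMod (4 * q)) ∉ stabilizer (ZMod (4 * q)) T) :
    ∃ a b : ℕ, 1 ≤ a ∧ a < b ∧ a + b = 2 * q ∧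
      orbit (ZMod (4 * q)) T = transClass (4 * q) a b a := by
  obtain ⟨x, u, v, hu, hv, huv, rfl⟩ := exists_eq_vadd_classRep_of_two_mul_mem_stabilizer hT h2q
  rw [stabilizer_vadd_eq_right] at hq
  rw [orbit_vadd]
  rcases lt_trichotomy u v with huv' | rfl | huv'
  · exact ⟨u, v, hu, huv', huv, (transClass_eq_orbit u v u).symm⟩
  · obtain rfl : u = q := by omega
    exact absurd natCast_mem_stabilizer_classRep hq
  · refine ⟨v, u, hv, huv', by omega, ?_⟩
    rw [transClass_eq_orbit, ← natCast_vadd_classRep huv, orbit_vadd]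

theorem setOf_transOrbits4_ncard_eq :
    {O ∈ transOrbits4 (4 * q) | O.ncard = q} = {transClass (4 * q) q q q} := by
  have hq := NeZero.pos q
  ext O
  simp only [Set.mem_ofPred_eq, Set.mem_singleton_iff, mem_transOrbits4]
  constructor
  · rintro ⟨⟨T, hT, rfl⟩, hO⟩
    exact orbit_eq_transClass_of_natCast_mem_stabilizer hT
      ((ncard_orbit_eq_iff_natCast_mem_stabilizer hT).mp hO)
  · rintro rfl
    have hrep : (classRep (4 * q) q q q).card = 4 := card_classRep hq hq hq (by omega)
    rw [transClass_eq_orbit, ncard_orbit_eq_iff_natCast_mem_stabilizer hrep]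
    exact ⟨⟨_, hrep, rfl⟩, natCast_mem_stabilizer_classRep⟩

theorem setOf_transOrbits4_ncard_eq_two_mul :
    {O ∈ transOrbits4 (4 * q) | O.ncard = 2 * q} =
      {O | ∃ a b : ℕ, 1 ≤ a ∧ a < b ∧ a + b = 2 * q ∧ O = transClass (4 * q) a b a} := by
  ext O
  simp only [Set.mem_ofPred_eq, mem_transOrbits4]
  constructor
  · rintro ⟨⟨T, hT, rfl⟩, hO⟩
    obtain ⟨h2q, hq⟩ := (ncard_orbit_eq_two_mul_iff hT).mp hO
    exact exists_orbit_eq_transClass_of_two_mul_mem_stabilizer hT h2q hq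
  · rintro ⟨a, b, ha, hab, hsum, rfl⟩
    have hrep : (classRep (4 * q) a b a).card = 4 := card_classRep ha (by omega) ha (by omega)
    rw [transClass_eq_orbit, ncard_orbit_eq_two_mul_iff hrep]
    exact ⟨⟨_, hrep, rfl⟩, two_mul_mem_stabilizer_classRep hsum,
      natCast_notMem_stabilizer_classRep hab hsum⟩

theorem ncard_eq_four_mul_of_mem_transOrbits4 {O : Set (Finset (ZMod (4 * q)))}
    (hO : O ∈ transOrbits4 (4 * q)) (hq : O.ncard ≠ q) (h2q : O.ncard ≠ 2 * q) :
    O.ncard = 4 * q := by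
  obtain ⟨T, hT, rfl⟩ := mem_transOrbits4.mp hO
  exact ncard_orbit_eq_four_mul_of_ne hT hq h2q

end FourDividesK

/-- For `k ≥ 8` with `4 ∣ k`: among the translation orbits of 4-element subsets of
`ZMod k`, there is exactly one orbit of size `k/4`, namely the class `[k/4,k/4,k/4]`;
the orbits of size `k/2` are exactly the classes `[a,b,a]` with `1 ≤ a < b` and
`a + b = k/2`, and there are exactly `k/4 - 1` of them; every other orbit has size `k`. -/
theorem transOrbits4_zero_mod_four (k : ℕ) (hk : 8 ≤ k) (hmod : k % 4 = 0) :
    { O ∈ transOrbits4 k | O.ncard = k / 4 }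
      = {transClass k (k / 4) (k / 4) (k / 4)} ∧
    { O ∈ transOrbits4 k | O.ncard = k / 2 }
      = { O | ∃ a b : ℕ, 1 ≤ a ∧ a < b ∧ a + b = k / 2 ∧ O = transClass k a b a } ∧
    { O ∈ transOrbits4 k | O.ncard = k / 2 }.ncard = k / 4 - 1 ∧
    (∀ O ∈ transOrbits4 k, O.ncard ≠ k / 4 → O.ncard ≠ k / 2 → O.ncard = k) := by
  obtain ⟨q, rfl⟩ : ∃ q, k = 4 * q := ⟨k / 4, by omega⟩
  have : NeZero q := ⟨by omega⟩
  rw [show 4 * q / 4 = q by omega, show 4 * q / 2 = 2 * q by omega,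
    setOf_transOrbits4_ncard_eq_two_mul]
  exact ⟨setOf_transOrbits4_ncard_eq, rfl, ncard_setOf_palindromic_transClass,
    fun O hO => ncard_eq_four_mul_of_mem_transOrbits4 hO⟩
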